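/- arXiv:1802.08835 — 6 statements merged into one kernel-verified Lean document; each statement's English description precedes it below -/
import Mathlib

section
/- The matrix ρ_t is positive semidefinite if and only if the point (t₁₁,t₂₂,t₃₃) lies in the tetrahedron 𝒯 with vertices (−1,−1,−1), (−1,1,1), (1,−1,1), (1,1,−1), i.e. iff 1−t₁₁−t₂₂−t₃₃ ≥ 0, 1−t₁₁+t₂₂+t₃₃ ≥ 0, 1+t₁₁−t₂₂+t₃₃ ≥ 0, and 1+t₁₁+t₂₂−t₃₃ ≥ 0. -/
/-!
The unnormalised Bell vectors `(0,1,-1,0)`, `(1,0,0,-1)`, `(1,0,0,1)`, `(0,1,1,0)` are mutually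
orthogonal eigenvectors of `ρ_t`, with eigenvalues one quarter of the four affine forms cutting out
the tetrahedron. So `ρ_t` is congruent to the diagonal matrix of these forms divided by `8`, and
positive semidefiniteness is invariant under congruence by an invertible matrix.
-/

noncomputable def rhoT (a b c : ℝ) : Matrix (Fin 4) (Fin 4) ℝ :=
  !![(1 + c)/4, 0, 0, (a - b)/4;
     0, (1 - c)/4, (a + b)/4, 0;
     0, (a + b)/4, (1 - c)/4, 0;
     (a - b)/4, 0, 0, (1 + c)/4]

open Matrix

theorem Matrix.posSemidef_conj_diagonal_iff {n R : Type*} [Fintype n] [DecidableEq n] [Ring R]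
    [PartialOrder R] [StarRing R] [StarOrderedRing R] {U : Matrix n n R} (hU : IsUnit U)
    (d : n → R) : (U * diagonal d * star U).PosSemidef ↔ ∀ i, 0 ≤ d i := by
  rw [hU.posSemidef_star_right_conjugate_iff, posSemidef_diagonal_iff]

def bellMatrix : Matrix (Fin 4) (Fin 4) ℝ :=
  !![0, 1, 1, 0;
     1, 0, 0, 1;
     -1, 0, 0, 1;
     0, -1, 1, 0]

def tetrahedronWeights (a b c : ℝ) : Fin 4 → ℝ :=
  ![1 - a - b - c, 1 - a + b + c, 1 + a - b + c, 1 + a + b - c]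

theorem det_bellMatrix : bellMatrix.det = 4 := by
  rw [det_succ_row_zero]
  simp [Fin.sum_univ_four, det_fin_three, bellMatrix, submatrix, Fin.succAbove]
  norm_num

theorem isUnit_bellMatrix : IsUnit bellMatrix := by
  rw [isUnit_iff_isUnit_det, det_bellMatrix]
  norm_num

theorem rhoT_eq_bellMatrix_mul_diagonal_mul_star (a b c : ℝ) :
    rhoT a b c =
      bellMatrix * diagonal (fun i ↦ tetrahedronWeights a b c i / 8) * star bellMatrix := by
  ext i j
  simp only [mul_apply, star_apply, star_trivial, Fin.sum_univ_four]
  fin_cases i <;> fin_cases j <;> simp [rhoT, bellMatrix, tetrahedronWeights] <;> ring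

/-- `ρ_t` is positive semidefinite iff `t` lies in the tetrahedron `𝒯`. -/
theorem rhoT_posSemidef_iff_mem_tetrahedron (a b c : ℝ) :
    (rhoT a b c).PosSemidef ↔
      (0 ≤ 1 - a - b - c ∧ 0 ≤ 1 - a + b + c ∧ 0 ≤ 1 + a - b + c ∧ 0 ≤ 1 + a + b - c) := by
  rw [rhoT_eq_bellMatrix_mul_diagonal_mul_star,
    posSemidef_conj_diagonal_iff isUnit_bellMatrix]
  simp [Fin.forall_fin_succ, tetrahedronWeights, le_div_iff₀]
end

section
/- The matrix L₁(t) defined below satisfies the symmetric logarithmic derivative equation ∂ρ_t/∂t₁₁ = (1/2)(L₁ ρ_t + ρ_t L₁) for all t in the interior of the tetrahedron 𝒯. -/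
/-- The symmetric logarithmic derivative `L₁` with respect to `t₁₁`. -/
noncomputable def L1 (a b c : ℝ) : Matrix (Fin 4) (Fin 4) ℝ :=
  !![(a - b)/((a - b)^2 - (1 + c)^2), 0, 0, (1 + c)/((1 + c)^2 - (a - b)^2);
     0, (a + b)/((a + b)^2 - (c - 1)^2), (c - 1)/((a + b)^2 - (c - 1)^2), 0;
     0, (c - 1)/((a + b)^2 - (c - 1)^2), (a + b)/((a + b)^2 - (c - 1)^2), 0;
     (1 + c)/((1 + c)^2 - (a - b)^2), 0, 0, (a - b)/((a - b)^2 - (1 + c)^2)]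

/-- The entrywise partial derivative `∂ρ_t/∂t₁₁`. -/
noncomputable def dRho1 : Matrix (Fin 4) (Fin 4) ℝ :=
  !![0, 0, 0, 1/4;
     0, 0, 1/4, 0;
     0, 1/4, 0, 0;
     1/4, 0, 0, 0]

set_option maxHeartbeats 2000000 in
/-- `L₁` satisfies the symmetric logarithmic derivative equation
`∂ρ_t/∂t₁₁ = (1/2)(L₁ ρ_t + ρ_t L₁)` for `t` in the interior of `𝒯`. -/
theorem sld_equation (a b c : ℝ)
    (h1 : 0 < 1 - a - b - c) (h2 : 0 < 1 - a + b + c)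
    (h3 : 0 < 1 + a - b + c) (h4 : 0 < 1 + a + b - c) :
    dRho1 = (1/2 : ℝ) • (L1 a b c * rhoT a b c + rhoT a b c * L1 a b c) := by
  have hd1 : (a - b)^2 - (1 + c)^2 ≠ 0 := by nlinarith [mul_pos h2 h3]
  have hd2 : (a + b)^2 - (c - 1)^2 ≠ 0 := by nlinarith [mul_pos h1 h4]
  have hd3 : (1 + c)^2 - (a - b)^2 ≠ 0 := by intro h; apply hd1; linarith
  have hd4 : (c - 1)^2 - (a + b)^2 ≠ 0 := by intro h; apply hd2; linarith
  ext i j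
  fin_cases i <;> fin_cases j <;>
    simp [dRho1, L1, rhoT, Matrix.mul_apply, Fin.sum_univ_four, Matrix.vecHead, Matrix.vecTail] <;>
    field_simp <;> ring
end

section
/- For all t in the interior of 𝒯, the symmetric logarithmic derivative L₁(t) commutes with ρ_t: L₁(t)·ρ_t = ρ_t·L₁(t). -/
/-- The symmetric logarithmic derivative `L₁` commutes with `ρ_t` on the interior of `𝒯`. -/
theorem L1_commutes_rhoT (a b c : ℝ)
    (h1 : 0 < 1 - a - b - c) (h2 : 0 < 1 - a + b + c)
    (h3 : 0 < 1 + a - b + c) (h4 : 0 < 1 + a + b - c) :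
    L1 a b c * rhoT a b c = rhoT a b c * L1 a b c := by
  ext i j
  fin_cases i <;> fin_cases j <;>
    simp [Matrix.mul_apply, Fin.sum_univ_four, rhoT, L1] <;> ring
end

section
/- The determinant of the quantum Fisher (Helstrom) metric g^H on the set of two-qubit states with maximally disordered subsystems equals 1/Δ(t), where Δ(t) = ((t₁₁+t₂₂)² − (1−t₃₃)²)·((t₁₁−t₂₂)² − (1+t₃₃)²). -/
/-!
Every entry of `g^H` is a polynomial in `t` divided by `Δ`, so `g^H = Δ⁻¹ • N` for the symmetric
matrix `N` of numerators, whose diagonal is constant. The determinant of such a matrix is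
`d³ + 2xyz − d(x² + y² + z²)`, and for the numerators of `g^H` this polynomial is exactly `Δ²`.
Hence `det g^H = Δ⁻³ · Δ² = Δ⁻¹`.
-/

section SymmConstDiag

variable {R : Type*} [CommRing R]

def symmConstDiag (d x y z : R) : Matrix (Fin 3) (Fin 3) R :=
  !![d, z, y;
     z, d, x;
     y, x, d]

theorem det_symmConstDiag (d x y z : R) :
    (symmConstDiag d x y z).det = d ^ 3 + 2 * x * y * z - d * (x ^ 2 + y ^ 2 + z ^ 2) := by
  simp only [symmConstDiag, Matrix.det_fin_three, Fin.isValue, Matrix.of_apply, Matrix.cons_val',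
    Matrix.cons_val_zero, Matrix.cons_val_fin_one, Matrix.cons_val_one, Matrix.cons_val]
  ring

theorem symmConstDiag_div {K : Type*} [Field K] (d x y z c : K) :
    symmConstDiag (d / c) (x / c) (y / c) (z / c) = c⁻¹ • symmConstDiag d x y z := by
  ext i j
  fin_cases i <;> fin_cases j <;> simp [symmConstDiag, div_eq_inv_mul]

end SymmConstDiag

/-- `Δ • g^H`, written in `(a, b, c) = (t₁₁, t₂₂, t₃₃)`. -/
def helstromNumerator {R : Type*} [CommRing R] (a b c : R) : Matrix (Fin 3) (Fin 3) R :=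
  symmConstDiag (1 - (a^2 + b^2 + c^2) - 2*a*b*c)
    ((1 + (a^2 + b^2 + c^2) - 2*a^2)*a + 2*b*c)
    ((1 + (a^2 + b^2 + c^2) - 2*b^2)*b + 2*a*c)
    ((1 + (a^2 + b^2 + c^2) - 2*c^2)*c + 2*a*b)

theorem det_helstromNumerator {R : Type*} [CommRing R] (a b c : R) :
    (helstromNumerator a b c).det = (((a + b)^2 - (1 - c)^2) * ((a - b)^2 - (1 + c)^2)) ^ 2 := by
  rw [helstromNumerator, det_symmConstDiag]
  ring

theorem det_helstrom_metric_general (a b c : ℝ)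
    (Δ : ℝ) (hΔ : Δ = ((a + b)^2 - (1 - c)^2) * ((a - b)^2 - (1 + c)^2))
    (gH : Matrix (Fin 3) (Fin 3) ℝ)
    (hgH : gH =
      !![(1 - (a^2 + b^2 + c^2) - 2*a*b*c)/Δ,
         ((1 + (a^2 + b^2 + c^2) - 2*c^2)*c + 2*a*b)/Δ,
         ((1 + (a^2 + b^2 + c^2) - 2*b^2)*b + 2*a*c)/Δ;
         ((1 + (a^2 + b^2 + c^2) - 2*c^2)*c + 2*a*b)/Δ,
         (1 - (a^2 + b^2 + c^2) - 2*a*b*c)/Δ,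
         ((1 + (a^2 + b^2 + c^2) - 2*a^2)*a + 2*b*c)/Δ;
         ((1 + (a^2 + b^2 + c^2) - 2*b^2)*b + 2*a*c)/Δ,
         ((1 + (a^2 + b^2 + c^2) - 2*a^2)*a + 2*b*c)/Δ,
         (1 - (a^2 + b^2 + c^2) - 2*a*b*c)/Δ]) :
    gH.det = 1/Δ := by
  have hg : gH = Δ⁻¹ • helstromNumerator a b c := by
    rw [hgH, helstromNumerator, ← symmConstDiag_div]
    rfl
  rw [hg, Matrix.det_smul, Fintype.card_fin, det_helstromNumerator, ← hΔ]
  rcases eq_or_ne Δ 0 with rfl | hΔ0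
  · simp
  · field_simp

/-- The determinant of the Helstrom quantum Fisher metric `g^H` on two-qubit states
with maximally disordered subsystems equals `1/Δ(t)`, where
`Δ(t) = ((t₁₁+t₂₂)² − (1−t₃₃)²)((t₁₁−t₂₂)² − (1+t₃₃)²)`. -/
theorem det_helstrom_metric (a b c : ℝ)
    (h1 : 0 < 1 - a - b - c) (h2 : 0 < 1 - a + b + c)
    (h3 : 0 < 1 + a - b + c) (h4 : 0 < 1 + a + b - c)
    (Δ : ℝ) (hΔ : Δ = ((a + b)^2 - (1 - c)^2) * ((a - b)^2 - (1 + c)^2))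
    (gH : Matrix (Fin 3) (Fin 3) ℝ)
    (hgH : gH =
      !![(1 - (a^2 + b^2 + c^2) - 2*a*b*c)/Δ,
         ((1 + (a^2 + b^2 + c^2) - 2*c^2)*c + 2*a*b)/Δ,
         ((1 + (a^2 + b^2 + c^2) - 2*b^2)*b + 2*a*c)/Δ;
         ((1 + (a^2 + b^2 + c^2) - 2*c^2)*c + 2*a*b)/Δ,
         (1 - (a^2 + b^2 + c^2) - 2*a*b*c)/Δ,
         ((1 + (a^2 + b^2 + c^2) - 2*a^2)*a + 2*b*c)/Δ;
         ((1 + (a^2 + b^2 + c^2) - 2*b^2)*b + 2*a*c)/Δ,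
         ((1 + (a^2 + b^2 + c^2) - 2*a^2)*a + 2*b*c)/Δ,
         (1 - (a^2 + b^2 + c^2) - 2*a*b*c)/Δ]) :
    gH.det = 1/Δ :=
  det_helstrom_metric_general a b c Δ hΔ gH hgH
end

section
/- The integral of 1/√Δ(t) over the tetrahedron 𝒯 equals π², where Δ(t) = ((t₁₁+t₂₂)² − (1−t₃₃)²)·((t₁₁−t₂₂)² − (1+t₃₃)²). -/
open MeasureTheory Real

def tetra : Set (Fin 3 → ℝ) :=
  {t | 0 ≤ 1 - t 0 - t 1 - t 2 ∧ 0 ≤ 1 - t 0 + t 1 + t 2 ∧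
       0 ≤ 1 + t 0 - t 1 + t 2 ∧ 0 ≤ 1 + t 0 + t 1 - t 2}

/-- `Δ(t) = ((t₁₁+t₂₂)² − (1−t₃₃)²)((t₁₁−t₂₂)² − (1+t₃₃)²)`. -/
noncomputable def deltaFun (t : Fin 3 → ℝ) : ℝ :=
  ((t 0 + t 1)^2 - (1 - t 2)^2) * ((t 0 - t 1)^2 - (1 + t 2)^2)

/-!
In the coordinates `t₁₁ = (u + v) / 2`, `t₂₂ = (u - v) / 2`, `t₃₃ = w` (Jacobian `1 / 2`) the
tetrahedron is `{|u| ≤ 1 - w, |v| ≤ 1 + w}` and `Δ = ((1 - w)² - u²)((1 + w)² - v²)`, so for fixed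
`w` the integrand is a product of two arcsine densities `1 / √(a² - x²)` on `[-a, a]`. Each of them
has total mass `π` (substitute `x = a sin θ`) when `a > 0`, i.e. for `|w| < 1`, which leaves
`½ · 2 · π · π = π²`.
-/

open scoped ENNReal
open Set Matrix

noncomputable def arcsineWeight (a x : ℝ) : ℝ≥0∞ :=
  (Icc (-a) a).indicator (fun x => ENNReal.ofReal (1 / √(a ^ 2 - x ^ 2))) x

lemma measurable_arcsineWeight : Measurable (Function.uncurry arcsineWeight) := by
  refine Measurable.ite ?_ (by fun_prop) measurable_const
  exact (measurableSet_le measurable_fst.neg measurable_snd).inter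
    (measurableSet_le measurable_snd measurable_fst)

lemma image_sin_Ioo : sin '' Ioo (-(π / 2)) (π / 2) = Ioo (-1) 1 :=
  sinPartialHomeomorph.image_source_eq_target

lemma lintegral_Ioo_one_div_sqrt_sq_sub_sq {a : ℝ} (ha : 0 < a) :
    ∫⁻ x in Ioo (-a) a, ENNReal.ofReal (1 / √(a ^ 2 - x ^ 2)) = ENNReal.ofReal π := by
  have himage : (fun θ => a * sin θ) '' Ioo (-(π / 2)) (π / 2) = Ioo (-a) a := by
    rw [← image_image (a * ·) sin, image_sin_Ioo, image_mul_left_Ioo ha, mul_neg_one, mul_one]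
  have hjac : ∀ θ ∈ Ioo (-(π / 2)) (π / 2),
      ENNReal.ofReal |a * cos θ| * ENNReal.ofReal (1 / √(a ^ 2 - (a * sin θ) ^ 2)) = 1 := by
    intro θ hθ
    have hpos : 0 < a * cos θ := mul_pos ha (cos_pos_of_mem_Ioo hθ)
    have hsqrt : √(a ^ 2 - (a * sin θ) ^ 2) = a * cos θ := by
      rw [← sqrt_sq hpos.le]
      congr 1
      linear_combination -a ^ 2 * sin_sq_add_cos_sq θ
    rw [hsqrt, abs_of_pos hpos, ← ENNReal.ofReal_mul hpos.le, mul_one_div_cancel hpos.ne',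
      ENNReal.ofReal_one]
  rw [← himage, lintegral_image_eq_lintegral_abs_deriv_mul measurableSet_Ioo
      (fun θ _ => ((hasDerivAt_sin θ).const_mul a).hasDerivWithinAt)
      (fun θ hθ θ' hθ' h => injOn_sin (Ioo_subset_Icc_self hθ) (Ioo_subset_Icc_self hθ')
        (mul_left_cancel₀ ha.ne' h)),
    setLIntegral_congr_fun measurableSet_Ioo hjac, setLIntegral_const, one_mul, volume_Ioo]
  congr 1
  ring

lemma lintegral_arcsineWeight (a : ℝ) :
    ∫⁻ x, arcsineWeight a x = if 0 < a then ENNReal.ofReal π else 0 := by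
  unfold arcsineWeight
  rw [lintegral_indicator measurableSet_Icc]
  split_ifs with ha
  · rw [setLIntegral_congr Ioo_ae_eq_Icc.symm, lintegral_Ioo_one_div_sqrt_sq_sub_sq ha]
  · exact setLIntegral_measure_zero _ _ (by rw [volume_Icc, ENNReal.ofReal_eq_zero]; linarith)

lemma lintegral_fin_three {α : Type*} [MeasureSpace α] [SigmaFinite (volume : Measure α)]
    {f : (Fin 3 → α) → ℝ≥0∞} (hf : Measurable f) :
    ∫⁻ p, f p = ∫⁻ w, ∫⁻ u, ∫⁻ v, f ![w, u, v] := by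
  rw [← ((volume_preserving_piFinSuccAbove (fun _ : Fin 3 => α) 0).symm _).lintegral_comp hf,
    Measure.volume_eq_prod, lintegral_prod _ (by fun_prop)]
  refine lintegral_congr fun w => ?_
  rw [← ((volume_preserving_finTwoArrow α).symm).lintegral_comp (by fun_prop),
    Measure.volume_eq_prod, lintegral_prod _ (by fun_prop)]
  refine lintegral_congr fun u => lintegral_congr fun v => congrArg f ?_
  ext i
  fin_cases i <;> rfl

lemma lintegral_comp_mulVec {ι : Type*} [Fintype ι] [DecidableEq ι] {M : Matrix ι ι ℝ}
    (hM : M.det ≠ 0) {f : (ι → ℝ) → ℝ≥0∞} (hf : Measurable f) :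
    ∫⁻ t, f t = ENNReal.ofReal |M.det| * ∫⁻ p, f (M *ᵥ p) := by
  have hmap : ∫⁻ p, f (M *ᵥ p) = ENNReal.ofReal |M.det⁻¹| * ∫⁻ t, f t := by
    rw [← smul_eq_mul, ← lintegral_smul_measure, ← Real.map_matrix_volume_pi_eq_smul_volume_pi hM,
      lintegral_map hf (toLin' M).continuous_of_finiteDimensional.measurable]
    rfl
  rw [hmap, ← mul_assoc, ← ENNReal.ofReal_mul (abs_nonneg _), ← abs_mul, mul_inv_cancel₀ hM,
    abs_one, ENNReal.ofReal_one, one_mul]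

noncomputable def tetraChart : Matrix (Fin 3) (Fin 3) ℝ := !![0, 1/2, 1/2; 0, 1/2, -1/2; 1, 0, 0]

lemma tetraChart_mulVec (w u v : ℝ) :
    tetraChart *ᵥ ![w, u, v] = ![(u + v) / 2, (u - v) / 2, w] := by
  ext i
  fin_cases i <;> simp [tetraChart, mulVec, dotProduct, Fin.sum_univ_three] <;> ring

lemma det_tetraChart : tetraChart.det = -(1 / 2) := by
  simp only [tetraChart, det_fin_three, of_apply, cons_val', cons_val_zero, cons_val_one,
    cons_val_fin_one, cons_val]
  norm_num

lemma measurableSet_tetra : MeasurableSet tetra := by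
  unfold tetra
  measurability

lemma mem_tetra_iff (u v w : ℝ) :
    ![(u + v) / 2, (u - v) / 2, w] ∈ tetra ↔
      u ∈ Icc (-(1 - w)) (1 - w) ∧ v ∈ Icc (-(1 + w)) (1 + w) := by
  simp only [tetra, mem_Icc, mem_ofPred_eq, cons_val_zero, cons_val_one, cons_val_two, head_cons,
    tail_cons]
  constructor
  · rintro ⟨h₁, h₂, h₃, h₄⟩
    refine ⟨⟨?_, ?_⟩, ?_, ?_⟩ <;> linarith
  · rintro ⟨⟨h₁, h₂⟩, h₃, h₄⟩
    refine ⟨?_, ?_, ?_, ?_⟩ <;> linarith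

lemma deltaFun_eq_mul (u v w : ℝ) :
    deltaFun ![(u + v) / 2, (u - v) / 2, w] = ((1 - w) ^ 2 - u ^ 2) * ((1 + w) ^ 2 - v ^ 2) := by
  simp only [deltaFun, cons_val_zero, cons_val_one, cons_val_two, head_cons, tail_cons]
  ring

lemma indicator_tetra_eq_mul (w u v : ℝ) :
    tetra.indicator (fun t => ENNReal.ofReal (1 / √(deltaFun t))) ![(u + v) / 2, (u - v) / 2, w] =
      arcsineWeight (1 - w) u * arcsineWeight (1 + w) v := by
  unfold arcsineWeight
  by_cases hu : u ∈ Icc (-(1 - w)) (1 - w)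
  · by_cases hv : v ∈ Icc (-(1 + w)) (1 + w)
    · have hu' : 0 ≤ (1 - w) ^ 2 - u ^ 2 := by nlinarith [hu.1, hu.2]
      rw [indicator_of_mem ((mem_tetra_iff u v w).2 ⟨hu, hv⟩), indicator_of_mem hu,
        indicator_of_mem hv, deltaFun_eq_mul, sqrt_mul hu', ← one_div_mul_one_div,
        ENNReal.ofReal_mul (by positivity)]
    · rw [indicator_of_notMem fun h => hv ((mem_tetra_iff u v w).1 h).2,
        indicator_of_notMem hv, mul_zero]
  · rw [indicator_of_notMem fun h => hu ((mem_tetra_iff u v w).1 h).1,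
      indicator_of_notMem hu, zero_mul]

lemma lintegral_arcsineWeight_mul_arcsineWeight :
    ∫⁻ w, ∫⁻ u, ∫⁻ v, arcsineWeight (1 - w) u * arcsineWeight (1 + w) v =
      ENNReal.ofReal (2 * π ^ 2) := by
  have hmeas (a : ℝ) : Measurable (arcsineWeight a) :=
    measurable_arcsineWeight.comp measurable_prodMk_left
  have hinner (w : ℝ) : ∫⁻ u, ∫⁻ v, arcsineWeight (1 - w) u * arcsineWeight (1 + w) v =
      (Ioo (-1) 1).indicator (fun _ => ENNReal.ofReal (π ^ 2)) w := by
    simp_rw [lintegral_const_mul _ (hmeas _)]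
    rw [lintegral_mul_const _ (hmeas _), lintegral_arcsineWeight, lintegral_arcsineWeight,
      indicator_apply]
    by_cases hw : w ∈ Ioo (-1) 1
    · rw [if_pos (show 0 < 1 - w by linarith [hw.2]), if_pos (show 0 < 1 + w by linarith [hw.1]),
        if_pos hw, ← ENNReal.ofReal_mul pi_pos.le, sq]
    · rw [if_neg hw]
      rcases not_and_or.1 hw with hw | hw
      · rw [if_neg (show ¬0 < 1 + w by linarith), mul_zero]
      · rw [if_neg (show ¬0 < 1 - w by linarith), zero_mul]
  simp_rw [hinner]
  rw [lintegral_indicator_const measurableSet_Ioo, volume_Ioo, ← ENNReal.ofReal_mul (by positivity)]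
  congr 1
  ring

/-- The quantum Fisher volume of all two-qubit states with maximally disordered
subsystems: `∫_𝒯 Δ(t)^{-1/2} dt = π²`. -/
theorem quantum_fisher_volume_tetra :
    ∫ t in tetra, 1 / Real.sqrt (deltaFun t) = π ^ 2 := by
  have hmeas : Measurable fun t => 1 / √(deltaFun t) := by
    unfold deltaFun; fun_prop
  set G := tetra.indicator fun t => ENNReal.ofReal (1 / √(deltaFun t))
  have hG : Measurable G := hmeas.ennreal_ofReal.indicator measurableSet_tetra
  have hdet : tetraChart.det ≠ 0 := by rw [det_tetraChart]; norm_num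
  have hlint : ∫⁻ t, G t = ENNReal.ofReal (π ^ 2) := by
    rw [lintegral_comp_mulVec hdet hG,
      lintegral_fin_three (f := fun p => G (tetraChart *ᵥ p))
        (hG.comp (toLin' tetraChart).continuous_of_finiteDimensional.measurable)]
    simp only [G, tetraChart_mulVec, indicator_tetra_eq_mul]
    rw [lintegral_arcsineWeight_mul_arcsineWeight, det_tetraChart,
      ← ENNReal.ofReal_mul (abs_nonneg _)]
    congr 1
    norm_num
    ring
  rw [integral_eq_lintegral_of_nonneg_ae (.of_forall fun t => by positivity)
    hmeas.aestronglyMeasurable, ← lintegral_indicator measurableSet_tetra, hlint,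
    ENNReal.toReal_ofReal (by positivity)]
end

section
/- For every purity value P with 1/3 < P ≤ 1/2, the intersection of the sphere {t ∈ ℝ³ : ‖t‖² = 4P−1} with the complement of the octahedron 𝒪 inside the tetrahedron 𝒯 is nonempty, while for 1/4 ≤ P ≤ 1/3 the sphere {‖t‖² = 4P−1} is entirely contained in 𝒪. -/
def octa : Set (Fin 3 → ℝ) := {t | |t 0| + |t 1| + |t 2| ≤ 1}

/-- For every purity `P` with `1/3 < P ≤ 1/2`, the sphere `‖t‖² = 4P−1` meets the
complement of the octahedron `𝒪` inside the tetrahedron `𝒯` (entangled states exist),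
while for `1/4 ≤ P ≤ 1/3` the sphere `‖t‖² = 4P−1` is entirely contained in `𝒪`
(all states are separable). -/
theorem entangled_iff_purity_gt_third :
    (∀ P : ℝ, 1/3 < P → P ≤ 1/2 →
      ∃ t : Fin 3 → ℝ, (t 0)^2 + (t 1)^2 + (t 2)^2 = 4*P - 1 ∧ t ∈ tetra ∧ t ∉ octa) ∧
    (∀ P : ℝ, 1/4 ≤ P → P ≤ 1/3 →
      ∀ t : Fin 3 → ℝ, (t 0)^2 + (t 1)^2 + (t 2)^2 = 4*P - 1 → t ∈ octa) := by
  constructor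
  · intro P hP1 hP2
    set s : ℝ := Real.sqrt ((4*P - 1)/3) with hs
    have hnn : (0:ℝ) ≤ (4*P - 1)/3 := by nlinarith
    have hsq : s^2 = (4*P - 1)/3 := Real.sq_sqrt hnn
    have hs_pos : 0 < s := Real.sqrt_pos.mpr (by nlinarith)
    have hs_gt : 1/3 < s := by
      nlinarith [hsq, hs_pos]
    have hs_le : s ≤ 1 := by
      nlinarith [hsq, hs_pos]
    refine ⟨fun _ => -s, ?_, ⟨?_, ?_, ?_, ?_⟩, ?_⟩
    · show (-s)^2 + (-s)^2 + (-s)^2 = 4*P - 1; nlinarith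
    · simp; linarith
    · simp; linarith
    · simp; linarith
    · simp; linarith
    · intro h
      have : |(-s)| + |(-s)| + |(-s)| ≤ 1 := h
      rw [abs_neg, abs_of_pos hs_pos] at this
      linarith
  · intro P hP1 hP2 t ht
    have h := sq_nonneg (|t 0| - |t 1|)
    have h2 := sq_nonneg (|t 0| - |t 2|)
    have h3 := sq_nonneg (|t 1| - |t 2|)
    have e0 : |t 0|^2 = (t 0)^2 := sq_abs _
    have e1 : |t 1|^2 = (t 1)^2 := sq_abs _
    have e2 : |t 2|^2 = (t 2)^2 := sq_abs _
    have key : (|t 0| + |t 1| + |t 2|)^2 ≤ 1 := by nlinarith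
    have hnn : 0 ≤ |t 0| + |t 1| + |t 2| := by positivity
    show |t 0| + |t 1| + |t 2| ≤ 1
    nlinarith [key, hnn, sq_nonneg (|t 0| + |t 1| + |t 2| - 1)]
end
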